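/- Let a ≤ b be integers, let w be a positive integer, and let x, y be complex numbers such that x+1 is not a nonpositive integer, none of the complex numbers y+k+1 and x−y−k+1 (for a ≤ k ≤ b) is a nonpositive integer, and x−y−b+1+i ≠ 0 for all integers 1 ≤ i ≤ b−a. Then Σ_{k=a}^{b−1} [ (−y−k−1)^w · H1(x−y−b+1, b−k−1) − (x−y−k+1)^w · H1(x−y−b+1, b−k) ] · (−1)^{wk} · binom(x, y+k)^{−w} = −(x+1)^w · (−1)^{wa} · binom(x+1, y+a)^{−w} · H1(x−y−b+1, b−a). -/

import Mathlib

open Finset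

/-- Generalized binomial coefficient via the complex Gamma function. -/
noncomputable def cbinom (u v : ℂ) : ℂ :=
  Complex.Gamma (u + 1) / (Complex.Gamma (v + 1) * Complex.Gamma (u - v + 1))

/-- Generalized harmonic number of order 1 with complex offset `c`:
`H1 c n = ∑_{i=1}^{n} 1/(c+i)` (zero if `n ≤ 0`). -/
noncomputable def H1 (c : ℂ) (n : ℤ) : ℂ :=
  ∑ i ∈ Finset.range n.toNat, 1 / (c + (i : ℂ) + 1)

/-! The summand is the forward difference `F (k + 1) - F k` of
`F k = (x + 1) ^ w * (-1) ^ (w * k) * binom(x + 1, y + k) ^ (-w) * H1 c (b - k)`, because the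
Gamma recurrence gives `binom(x + 1, y + k + 1) = (x + 1) / (y + k + 1) * binom(x, y + k)` and
`binom(x + 1, y + k) = (x + 1) / (x - y - k + 1) * binom(x, y + k)`. This works for any sequence
in place of `k ↦ H1 c (b - k)`; the sum telescopes to `F b - F a`, and `F b = 0` since `H1 c 0 = 0`.
-/

theorem Finset.sum_Ico_int_telescope {M : Type*} [AddCommGroup M] (f : ℤ → M) {a b : ℤ}
    (hab : a ≤ b) :
    ∑ k ∈ Ico a b, (f (k + 1) - f k) = f b - f a := by
  induction b, hab using Int.leInduction with
  | base => simp
  | succ n han ih =>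
    rw [← insert_Ico_right_eq_Ico_add_one han, sum_insert right_notMem_Ico, ih]
    abel

theorem pow_mul_zpow_neg_of_eq_div_mul {K : Type*} [Field K] {p q c d : K} (hp : p ≠ 0)
    (h : c = p / q * d) (n : ℕ) : p ^ n * c ^ (-(n : ℤ)) = q ^ n * d ^ (-(n : ℤ)) := by
  rw [h, zpow_neg, zpow_neg, zpow_natCast, zpow_natCast, mul_pow, div_pow, mul_inv, inv_div,
    ← mul_assoc, mul_div_cancel₀ _ (pow_ne_zero n hp)]

theorem cbinom_add_one_add_one {u v : ℂ} (hu : u + 1 ≠ 0) (hv : v + 1 ≠ 0) :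
    cbinom (u + 1) (v + 1) = (u + 1) / (v + 1) * cbinom u v := by
  rw [cbinom, cbinom, Complex.Gamma_add_one _ hu, Complex.Gamma_add_one _ hv,
    show u + 1 - (v + 1) + 1 = u - v + 1 by ring, mul_assoc, mul_div_mul_comm]

theorem cbinom_add_one_left {u v : ℂ} (hu : u + 1 ≠ 0) (huv : u - v + 1 ≠ 0) :
    cbinom (u + 1) v = (u + 1) / (u - v + 1) * cbinom u v := by
  rw [cbinom, cbinom, Complex.Gamma_add_one _ hu, show u + 1 - v + 1 = u - v + 1 + 1 by ring,
    Complex.Gamma_add_one _ huv, mul_left_comm, mul_div_mul_comm]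

section Telescoping

variable (w : ℕ) (x y : ℂ) (h : ℤ → ℂ)

noncomputable def cbinomPrimitive (k : ℤ) : ℂ :=
  (x + 1) ^ w * (-1 : ℂ) ^ ((w : ℤ) * k) * cbinom (x + 1) (y + k) ^ (-(w : ℤ)) * h k

variable {w x y}

theorem cbinomPrimitive_succ_sub {k : ℤ} (hx : x + 1 ≠ 0) (hy : y + k + 1 ≠ 0)
    (hxy : x - y - k + 1 ≠ 0) :
    cbinomPrimitive w x y h (k + 1) - cbinomPrimitive w x y h k =
      ((-y - k - 1) ^ w * h (k + 1) - (x - y - k + 1) ^ w * h k) *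
        ((-1 : ℂ) ^ ((w : ℤ) * k) * cbinom x (y + k) ^ (-(w : ℤ))) := by
  have hsucc : (x + 1) ^ w * cbinom (x + 1) (y + k + 1) ^ (-(w : ℤ)) =
      (y + k + 1) ^ w * cbinom x (y + k) ^ (-(w : ℤ)) :=
    pow_mul_zpow_neg_of_eq_div_mul hx (cbinom_add_one_add_one hx hy) w
  have hsame : (x + 1) ^ w * cbinom (x + 1) (y + k) ^ (-(w : ℤ)) =
      (x - y - k + 1) ^ w * cbinom x (y + k) ^ (-(w : ℤ)) := by
    rw [pow_mul_zpow_neg_of_eq_div_mul hx (cbinom_add_one_left hx (by rwa [← sub_sub])) w,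
      sub_sub]
  have hsign : (-1 : ℂ) ^ ((w : ℤ) * (k + 1)) = (-1) ^ ((w : ℤ) * k) * (-1) ^ w := by
    rw [mul_add_one, zpow_add₀ (neg_ne_zero.mpr one_ne_zero), zpow_natCast]
  have hneg : (-y - k - 1) ^ w = (-1) ^ w * (y + k + 1) ^ w := by
    rw [← mul_pow]; ring
  simp only [cbinomPrimitive]
  push_cast
  rw [hsign, hneg, ← add_assoc]
  linear_combination (-1 : ℂ) ^ ((w : ℤ) * k) * ((-1) ^ w * h (k + 1) * hsucc - h k * hsame)

theorem sum_Ico_eq_cbinomPrimitive_sub {a b : ℤ} (hab : a ≤ b) (hx : x + 1 ≠ 0)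
    (hy : ∀ k ∈ Ico a b, y + k + 1 ≠ 0) (hxy : ∀ k ∈ Ico a b, x - y - k + 1 ≠ 0) :
    ∑ k ∈ Ico a b, ((-y - k - 1) ^ w * h (k + 1) - (x - y - k + 1) ^ w * h k) *
        ((-1 : ℂ) ^ ((w : ℤ) * k) * cbinom x (y + k) ^ (-(w : ℤ))) =
      cbinomPrimitive w x y h b - cbinomPrimitive w x y h a := by
  rw [← sum_Ico_int_telescope _ hab]
  exact sum_congr rfl fun k hk ↦ (cbinomPrimitive_succ_sub h hx (hy k hk) (hxy k hk)).symm

end Telescoping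

theorem harmonic_identity_3b_general (a b : ℤ) (hab : a ≤ b) (w : ℕ) (x y : ℂ)
    (hx : ∀ m : ℕ, x + 1 ≠ -(m : ℂ))
    (h1 : ∀ k : ℤ, a ≤ k → k ≤ b → ∀ m : ℕ, y + (k : ℂ) + 1 ≠ -(m : ℂ))
    (h2 : ∀ k : ℤ, a ≤ k → k ≤ b → ∀ m : ℕ, x - y - (k : ℂ) + 1 ≠ -(m : ℂ)) :
    ∑ k ∈ Finset.Ico a b,
        (((-y - (k : ℂ) - 1) ^ w * H1 (x - y - (b : ℂ) + 1) (b - k - 1) -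
          (x - y - (k : ℂ) + 1) ^ w * H1 (x - y - (b : ℂ) + 1) (b - k)) *
          ((-1 : ℂ) ^ ((w : ℤ) * k) * cbinom x (y + (k : ℂ)) ^ (-(w : ℤ)))) =
    -((x + 1) ^ w * (-1 : ℂ) ^ ((w : ℤ) * a) * cbinom (x + 1) (y + (a : ℂ)) ^ (-(w : ℤ)) *
      H1 (x - y - (b : ℂ) + 1) (b - a)) := by
  set h : ℤ → ℂ := fun k ↦ H1 (x - y - b + 1) (b - k)
  have hshift (k : ℤ) : H1 (x - y - b + 1) (b - k - 1) = h (k + 1) := by simp only [h, sub_sub]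
  have hyk (k : ℤ) (hk : k ∈ Ico a b) : y + k + 1 ≠ 0 := by
    simpa using h1 k (mem_Ico.1 hk).1 (mem_Ico.1 hk).2.le 0
  have hxyk (k : ℤ) (hk : k ∈ Ico a b) : x - y - k + 1 ≠ 0 := by
    simpa using h2 k (mem_Ico.1 hk).1 (mem_Ico.1 hk).2.le 0
  have hvanish : cbinomPrimitive w x y h b = 0 := by simp [cbinomPrimitive, h, H1]
  simp only [hshift]
  rw [sum_Ico_eq_cbinomPrimitive_sub h hab (by simpa using hx 0) hyk hxyk, hvanish, zero_sub,
    cbinomPrimitive]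

theorem harmonic_identity_3b (a b : ℤ) (hab : a ≤ b) (w : ℕ) (hw : 0 < w) (x y : ℂ)
    (hx : ∀ m : ℕ, x + 1 ≠ -(m : ℂ))
    (h1 : ∀ k : ℤ, a ≤ k → k ≤ b → ∀ m : ℕ, y + (k : ℂ) + 1 ≠ -(m : ℂ))
    (h2 : ∀ k : ℤ, a ≤ k → k ≤ b → ∀ m : ℕ, x - y - (k : ℂ) + 1 ≠ -(m : ℂ))
    (hh : ∀ i : ℤ, 1 ≤ i → i ≤ b - a → x - y - (b : ℂ) + 1 + (i : ℂ) ≠ 0) :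
    ∑ k ∈ Finset.Ico a b,
        (((-y - (k : ℂ) - 1) ^ w * H1 (x - y - (b : ℂ) + 1) (b - k - 1) -
          (x - y - (k : ℂ) + 1) ^ w * H1 (x - y - (b : ℂ) + 1) (b - k)) *
          ((-1 : ℂ) ^ ((w : ℤ) * k) * cbinom x (y + (k : ℂ)) ^ (-(w : ℤ)))) =
    -((x + 1) ^ w * (-1 : ℂ) ^ ((w : ℤ) * a) * cbinom (x + 1) (y + (a : ℂ)) ^ (-(w : ℤ)) *
      H1 (x - y - (b : ℂ) + 1) (b - a)) :=
  harmonic_identity_3b_general a b hab w x y hx h1 h2
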